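/- arXiv:2403.02968 — 2 statements merged into one kernel-verified Lean document; each statement's English description precedes it below -/
import Mathlib

section
/- For all real x with x ≥ 1/(10N) (where N ≥ 1 is a natural number), we have -log(x) ≤ -(x-1) + 2·log(10N)·(x-1)². -/
/-! Put `L = log (10 N)`, so that the hypothesis reads `x ≥ exp (-L)`, and `L ≥ 1`.
If `x⁻¹ ≤ 2L`, then `-log x ≤ x⁻¹ - 1 = -(x - 1) + (x - 1)² / x` and `(x - 1)² / x ≤ 2L (x - 1)²`.
Otherwise `x < 1 / (2L)` is far from `1`, and the crude bound `-log x ≤ L` is already below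
`(1 - x) + 2L (1 - x)² ≥ 2L - 1`. -/

open Real

namespace Real

lemma neg_log_le_of_inv_le {L x : ℝ} (hx : 0 < x) (hxL : x⁻¹ ≤ 2 * L) :
    -log x ≤ -(x - 1) + 2 * L * (x - 1) ^ 2 := by
  have hlog : -log x ≤ x⁻¹ - 1 := by
    rw [← log_inv]
    exact log_le_sub_one_of_pos (inv_pos.mpr hx)
  have hexpand : x⁻¹ - 1 = -(x - 1) + x⁻¹ * (x - 1) ^ 2 := by
    field_simp
    ring
  calc -log x ≤ -(x - 1) + x⁻¹ * (x - 1) ^ 2 := hexpand ▸ hlog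
    _ ≤ -(x - 1) + 2 * L * (x - 1) ^ 2 := by gcongr

lemma neg_log_le_of_exp_neg_le_of_le {L x : ℝ} (hL : 1 ≤ L) (hx : exp (-L) ≤ x)
    (hxL : x ≤ 1 / (2 * L)) : -log x ≤ -(x - 1) + 2 * L * (x - 1) ^ 2 := by
  have hlog : -log x ≤ L := by
    rw [neg_le, ← log_exp (-L)]
    exact log_le_log (exp_pos _) hx
  have hinvL : 1 / (2 * L) ≤ 1 / 2 := by
    gcongr
    linarith
  have hsq : (1 - 1 / (2 * L)) ^ 2 ≤ (x - 1) ^ 2 := by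
    rw [sub_sq_comm x]
    exact pow_le_pow_left₀ (by linarith) (by linarith) 2
  have hexpand : 2 * L * (1 - 1 / (2 * L)) ^ 2 = 2 * L - 2 + 1 / (2 * L) := by
    field_simp
    ring
  calc -log x ≤ L := hlog
    _ ≤ (1 - 1 / (2 * L)) + 2 * L * (1 - 1 / (2 * L)) ^ 2 := by rw [hexpand]; linarith
    _ ≤ -(x - 1) + 2 * L * (x - 1) ^ 2 := by gcongr; linarith

theorem neg_log_le_of_exp_neg_le {L x : ℝ} (hL : 1 ≤ L) (hx : exp (-L) ≤ x) :
    -log x ≤ -(x - 1) + 2 * L * (x - 1) ^ 2 := by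
  rcases le_total x (1 / (2 * L)) with hxL | hxL
  · exact neg_log_le_of_exp_neg_le_of_le hL hx hxL
  · have hL0 : 0 < 2 * L := by linarith
    have hx0 : 0 < x := lt_of_lt_of_le (one_div_pos.mpr hL0) hxL
    refine neg_log_le_of_inv_le hx0 ?_
    rwa [inv_le_comm₀ hx0 hL0, ← one_div]

end Real

/-- For all real `x` with `x ≥ 1/(10N)` (where `N ≥ 1` is a natural number),
`-log x ≤ -(x-1) + 2 log(10N) (x-1)²`. -/
theorem stmt_0 (N : ℕ) (hN : 1 ≤ N) (x : ℝ) (hx : x ≥ 1 / (10 * (N : ℝ))) :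
    -Real.log x ≤ -(x - 1) + 2 * Real.log (10 * (N : ℝ)) * (x - 1) ^ 2 := by
  have h10N : 10 ≤ 10 * (N : ℝ) := by
    have : (1 : ℝ) ≤ N := by exact_mod_cast hN
    linarith
  have hpos : 0 < 10 * (N : ℝ) := by linarith
  have hL : 1 ≤ Real.log (10 * (N : ℝ)) := by
    rw [Real.le_log_iff_exp_le hpos]
    linarith [Real.exp_one_lt_d9]
  refine Real.neg_log_le_of_exp_neg_le hL ?_
  rwa [Real.exp_neg, Real.exp_log hpos, ← one_div]
end

section
/- Let H be a d×d Hermitian matrix with ‖H‖_∞ ≤ 1 and Tr(H) = 0, and let 0 < t ≤ 1. Then |Tr(e^{itH})|² ≤ d² − d·t²·Tr(H²) + 4·d²·t⁴. -/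
/-!
Diagonalize `H = U diag(λ) U*`. The eigenvalues lie in `[-1, 1]` and sum to `0`, and
`|Tr e^{itH}|² = |∑ⱼ e^{itλⱼ}|² = ∑ⱼₖ cos(t(λⱼ - λₖ))`. Bounding each cosine by
`1 - x²/2 + x⁴/24` and using `∑ⱼₖ (λⱼ - λₖ)² = 2d ∑ⱼ λⱼ² - 2(∑ⱼ λⱼ)² = 2d Tr H²` gives the
claim.
-/

open scoped Matrix.Norms.L2Operator

namespace Real

theorem cos_le_one_sub_sq_div_two_add_pow_four_div_24 (x : ℝ) :
    cos x ≤ 1 - x ^ 2 / 2 + x ^ 4 / 24 := by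
  wlog hx : 0 ≤ x generalizing x
  · simpa [show (-x) ^ 4 = x ^ 4 by ring] using this (-x) (by linarith)
  obtain ⟨y, rfl⟩ : ∃ y, x = 2 * y := ⟨x / 2, by ring⟩
  have hy : 0 ≤ y := by linarith
  -- Square `y - y ^ 3 / 6 ≤ sin y` where its left side is nonnegative; elsewhere the bound is `≤ 0`.
  have hsin : y ^ 2 - y ^ 4 / 3 ≤ sin y ^ 2 := by
    have hcube := sin_ge_sub_cube hy
    rcases le_total 0 (y - y ^ 3 / 6) with h | h
    · nlinarith [pow_le_pow_left₀ h hcube 2, pow_nonneg hy 6]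
    · nlinarith [sq_nonneg (sin y), mul_nonpos_of_nonneg_of_nonpos hy h,
        mul_nonneg hy (pow_nonneg hy 3)]
  rw [sin_sq_eq_half_sub] at hsin
  nlinarith

end Real

theorem Finset.sum_sum_sub_sq {ι : Type*} [Fintype ι] (a : ι → ℝ) :
    ∑ i, ∑ j, (a i - a j) ^ 2 = 2 * Fintype.card ι * ∑ i, a i ^ 2 - 2 * (∑ i, a i) ^ 2 := by
  simp_rw [sub_sq, Finset.sum_add_distrib, Finset.sum_sub_distrib, mul_assoc, ← Finset.mul_sum,
    ← Finset.sum_mul, Finset.sum_const, Finset.card_univ, nsmul_eq_mul, ← Finset.mul_sum]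
  ring

namespace Complex

open ComplexConjugate

theorem sq_norm_sum_exp_mul_I {ι : Type*} [Fintype ι] (θ : ι → ℝ) :
    ‖∑ i, exp (θ i * I)‖ ^ 2 = ∑ i, ∑ j, Real.cos (θ i - θ j) := by
  calc ‖∑ i, exp (θ i * I)‖ ^ 2 = ((∑ i, exp (θ i * I)) * conj (∑ i, exp (θ i * I))).re := by
        rw [mul_conj']
        norm_cast
    _ = ∑ i, ∑ j, Real.cos (θ i - θ j) := by
        simp only [map_sum, Finset.sum_mul_sum, re_sum, ← exp_conj, ← exp_add]
        refine Finset.sum_congr rfl fun i _ => Finset.sum_congr rfl fun j _ => ?_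
        rw [← exp_ofReal_mul_I_re]
        congr 2
        simp only [map_mul, conj_ofReal, conj_I, ofReal_sub]
        ring

theorem sq_norm_sum_exp_mul_I_le {ι : Type*} [Fintype ι] (e : ι → ℝ) (he : ∀ i, |e i| ≤ 1)
    (hsum : ∑ i, e i = 0) (t : ℝ) :
    ‖∑ i, exp ((t * e i : ℝ) * I)‖ ^ 2 ≤
      Fintype.card ι ^ 2 - Fintype.card ι * t ^ 2 * ∑ i, e i ^ 2
        + 2 / 3 * Fintype.card ι ^ 2 * t ^ 4 := by
  have hcos (i j : ι) :
      Real.cos (t * e i - t * e j) ≤ 1 + 2 / 3 * t ^ 4 - t ^ 2 / 2 * (e i - e j) ^ 2 := by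
    obtain ⟨hi₁, hi₂⟩ := abs_le.mp (he i)
    obtain ⟨hj₁, hj₂⟩ := abs_le.mp (he j)
    have hdiff : (e i - e j) ^ 2 ≤ 2 ^ 2 := sq_le_sq' (by linarith) (by linarith)
    have hquartic : (t * e i - t * e j) ^ 4 ≤ 16 * t ^ 4 := by
      have := mul_le_mul_of_nonneg_left (pow_le_pow_left₀ (sq_nonneg _) hdiff 2)
        (pow_nonneg (sq_nonneg t) 2)
      linear_combination this
    linear_combination Real.cos_le_one_sub_sq_div_two_add_pow_four_div_24 (t * e i - t * e j)
      + hquartic / 24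
  calc ‖∑ i, exp ((t * e i : ℝ) * I)‖ ^ 2 = ∑ i, ∑ j, Real.cos (t * e i - t * e j) :=
        sq_norm_sum_exp_mul_I _
    _ ≤ ∑ i, ∑ j, (1 + 2 / 3 * t ^ 4 - t ^ 2 / 2 * (e i - e j) ^ 2) := by
        gcongr with i _ j _
        exact hcos i j
    _ = _ := by
        simp_rw [Finset.sum_sub_distrib, ← Finset.mul_sum, Finset.sum_sum_sub_sq, hsum,
          Finset.sum_const, Finset.card_univ, nsmul_eq_mul]
        ring

end Complex

namespace Matrix

open Unitary

variable {n : Type*} [Fintype n] [DecidableEq n]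

theorem trace_conjStarAlgAut {𝕜 : Type*} [RCLike 𝕜] (U : unitary (Matrix n n 𝕜))
    (A : Matrix n n 𝕜) : (conjStarAlgAut 𝕜 _ U A).trace = A.trace := by
  rw [conjStarAlgAut_apply, trace_mul_cycle, coe_star_mul_self, one_mul]

theorem exp_conjStarAlgAut {𝕜 : Type*} [RCLike 𝕜] (U : unitary (Matrix n n 𝕜))
    (A : Matrix n n 𝕜) :
    NormedSpace.exp (conjStarAlgAut 𝕜 _ U A) = conjStarAlgAut 𝕜 _ U (NormedSpace.exp A) :=
  exp_units_conj (toUnits U) A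

namespace IsHermitian

theorem trace_mul_self {𝕜 : Type*} [RCLike 𝕜] {A : Matrix n n 𝕜} (hA : A.IsHermitian) :
    (A * A).trace = ∑ i, (hA.eigenvalues i : 𝕜) ^ 2 := by
  conv_lhs => rw [hA.spectral_theorem]
  rw [← map_mul, trace_conjStarAlgAut, diagonal_mul_diagonal, trace_diagonal]
  simp [sq]

theorem trace_exp_smul {A : Matrix n n ℂ} (hA : A.IsHermitian) (c : ℂ) :
    (NormedSpace.exp (c • A)).trace = ∑ i, Complex.exp (c * hA.eigenvalues i) := by
  conv_lhs => rw [hA.spectral_theorem]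
  rw [← map_smul, exp_conjStarAlgAut, trace_conjStarAlgAut, ← diagonal_smul, exp_diagonal,
    trace_diagonal]
  simp [Complex.exp_eq_exp_ℂ]

theorem abs_eigenvalues_le_norm {A : Matrix n n ℂ} (hA : A.IsHermitian) (i : n) :
    |hA.eigenvalues i| ≤ ‖A‖ := by
  have : Nonempty n := ⟨i⟩
  simpa using spectrum.norm_le_norm_of_mem
    (spectrum.algebraMap_mem ℂ (hA.eigenvalues_mem_spectrum_real i))

end IsHermitian

end Matrix

theorem stmt_12_general (d : ℕ) (H : Matrix (Fin d) (Fin d) ℂ)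
    (hH : H.IsHermitian) (hHnorm : ‖H‖ ≤ 1) (hHtr : H.trace = 0)
    (t : ℝ) :
    ‖(NormedSpace.exp (((t : ℂ) * Complex.I) • H)).trace‖ ^ 2 ≤
      (d : ℝ) ^ 2 - (d : ℝ) * t ^ 2 * ((H * H).trace.re) + 4 * (d : ℝ) ^ 2 * t ^ 4 := by
  have he (i : Fin d) : |hH.eigenvalues i| ≤ 1 := (hH.abs_eigenvalues_le_norm i).trans hHnorm
  have hsum : ∑ i, hH.eigenvalues i = 0 := by
    have := hH.trace_eq_sum_eigenvalues.symm.trans hHtr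
    simp only [RCLike.ofReal_eq_complex_ofReal] at this
    exact_mod_cast this
  have htrace_sq : (H * H).trace.re = ∑ i, hH.eigenvalues i ^ 2 := by
    simp only [hH.trace_mul_self, RCLike.ofReal_eq_complex_ofReal, Complex.re_sum,
      ← Complex.ofReal_pow, Complex.ofReal_re]
  have htrace_exp : (NormedSpace.exp (((t : ℂ) * Complex.I) • H)).trace =
      ∑ i, Complex.exp ((t * hH.eigenvalues i : ℝ) * Complex.I) := by
    rw [hH.trace_exp_smul]
    push_cast
    ring_nf
  have hbound := Complex.sq_norm_sum_exp_mul_I_le _ he hsum t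
  rw [Fintype.card_fin] at hbound
  rw [htrace_exp, htrace_sq]
  linarith [show 0 ≤ (d : ℝ) ^ 2 * t ^ 4 by positivity]

/-- Let `H` be a `d×d` Hermitian matrix with `‖H‖_∞ ≤ 1` and `Tr H = 0`, and let
`0 < t ≤ 1`. Then `|Tr(e^{itH})|² ≤ d² − d·t²·Tr(H²) + 4·d²·t⁴`. -/
theorem stmt_12 (d : ℕ) (H : Matrix (Fin d) (Fin d) ℂ)
    (hH : H.IsHermitian) (hHnorm : ‖H‖ ≤ 1) (hHtr : H.trace = 0)
    (t : ℝ) (ht0 : 0 < t) (ht1 : t ≤ 1) :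
    ‖(NormedSpace.exp (((t : ℂ) * Complex.I) • H)).trace‖ ^ 2 ≤
      (d : ℝ) ^ 2 - (d : ℝ) * t ^ 2 * ((H * H).trace.re) + 4 * (d : ℝ) ^ 2 * t ^ 4 :=
  stmt_12_general d H hH hHnorm hHtr t
end
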